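/- Let n ≥ 4. The symmetric canonical elements for the integer lattice ℤ^n of SO(2n) are precisely the elements ξ_I + ε^1_I H_s and ξ_I + ε^1_I H_s + 2ε^2_I H_s, where I ranges over subsets of {1,…,n} and s ranges over {n−1,n} ∩ I. -/
import Mathlib


/-- The duals of the simple roots of `so(2n)` (1-based index):
`H_i = E_1+⋯+E_i` for `i ≤ n-2`, `H_{n-1} = (E_1+⋯+E_{n-1}-E_n)/2`,
`H_n = (E_1+⋯+E_{n-1}+E_n)/2`. -/
noncomputable def Hso (n i : ℕ) : Fin n → ℝ :=
  if i = n - 1 then (fun j => if (j : ℕ) + 2 ≤ n then 1 / 2 else -(1 / 2))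
  else if i = n then (fun _ => 1 / 2)
  else fun j => if (j : ℕ) + 1 ≤ i then 1 else 0

/-- `ε^i_I = 1` if `|I ∩ {n-1, n}| = i`, and `0` otherwise. -/
def epsI (n : ℕ) (I : Finset ℕ) (i : ℕ) : ℕ :=
  if (I ∩ {n - 1, n}).card = i then 1 else 0

/-- The integer lattice of `Spin(2n)`: integer vectors with even coordinate sum. -/
def JSpin (n : ℕ) : Set (Fin n → ℝ) :=
  {v | ∃ a : Fin n → ℤ, (∀ j, v j = a j) ∧ Even (∑ j, a j)}

/-- The set of `I`-canonical elements for a lattice `𝔏 ⊆ ℝ^n`. -/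
def ICanonSet (n : ℕ) (𝔏 : Set (Fin n → ℝ)) (H : ℕ → Fin n → ℝ) (I : Finset ℕ) :
    Set (Fin n → ℝ) :=
  {ξ | ∃ c : ℕ → ℕ, (∀ i ∈ I, 1 ≤ c i) ∧ ξ = ∑ i ∈ I, c i • H i ∧ ξ ∈ 𝔏 ∧
    ∀ c' : ℕ → ℕ, (∀ i ∈ I, 1 ≤ c' i ∧ c' i ≤ c i) →
      (∑ i ∈ I, c' i • H i) ∈ 𝔏 → (∑ i ∈ I, c' i • H i) = ξ}

/-- The integer lattice `ℤ^n` inside `ℝ^n` (the integer lattice of `SO(2n)`). -/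
def IntLat (n : ℕ) : Set (Fin n → ℝ) := {v | ∀ j, ∃ m : ℤ, v j = m}

/-- The set of symmetric canonical elements for a lattice `𝔏 ⊆ ℝ^n`. -/
def SymCanonSet (n : ℕ) (𝔏 : Set (Fin n → ℝ)) (H : ℕ → Fin n → ℝ) :
    Set (Fin n → ℝ) :=
  {ξ | ∃ c : ℕ → ℕ, ξ = ∑ i ∈ Finset.Icc 1 n, c i • H i ∧ ξ ∈ 𝔏 ∧
    ∀ c' : ℕ → ℕ, (∀ i ∈ Finset.Icc 1 n, c' i ≤ c i) →
      (∑ i ∈ Finset.Icc 1 n, c' i • H i) ∈ 𝔏 →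
      (ξ - ∑ i ∈ Finset.Icc 1 n, c' i • H i) ∈ (fun v => (2 : ℝ) • v) '' 𝔏 →
      (∑ i ∈ Finset.Icc 1 n, c' i • H i) = ξ}

noncomputable def Sv (n : ℕ) (c : ℕ → ℕ) : Fin n → ℝ :=
  ∑ i ∈ Finset.Icc 1 n, c i • Hso n i

lemma Icc_split (n : ℕ) (hn : 4 ≤ n) :
    Finset.Icc 1 n = insert (n-1) (insert n (Finset.Icc 1 (n-2))) := by
  ext i
  simp only [Finset.mem_insert, Finset.mem_Icc]
  omega

lemma Hso_low (n i : ℕ) (hn : 4 ≤ n) (hi : i ∈ Finset.Icc 1 (n-2)) (j : Fin n) :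
    Hso n i j = if (j : ℕ) + 1 ≤ i then 1 else 0 := by
  simp only [Finset.mem_Icc] at hi
  unfold Hso
  rw [if_neg (by omega), if_neg (by omega)]

lemma Sv_apply (n : ℕ) (hn : 4 ≤ n) (c : ℕ → ℕ) (j : Fin n) :
    Sv n c j = (∑ i ∈ Finset.Icc ((j:ℕ)+1) (n-2), (c i : ℝ)) +
      (if (j:ℕ)+2 ≤ n then ((c (n-1) : ℝ) + c n)/2 else ((c n : ℝ) - c (n-1))/2) := by
  have h1 : (n:ℕ)-1 ∉ insert n (Finset.Icc 1 (n-2)) := by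
    simp only [Finset.mem_insert, Finset.mem_Icc]; omega
  have h2 : n ∉ Finset.Icc 1 (n-2) := by simp only [Finset.mem_Icc]; omega
  have hS : Sv n c j = (c (n-1) : ℝ) * (Hso n (n-1) j) + (c n : ℝ) * (Hso n n j)
      + ∑ i ∈ Finset.Icc 1 (n-2), (c i : ℝ) * (Hso n i j) := by
    unfold Sv
    rw [Icc_split n hn, Finset.sum_insert h1, Finset.sum_insert h2]
    simp [Pi.smul_apply, nsmul_eq_mul, Finset.sum_apply, add_assoc]
  rw [hS]
  have hHn1 : Hso n (n-1) j = if (j : ℕ) + 2 ≤ n then 1 / 2 else -(1 / 2) := by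
    unfold Hso; rw [if_pos rfl]
  have hHn : Hso n n j = 1/2 := by
    unfold Hso; rw [if_neg (by omega), if_pos rfl]
  have hlow : ∑ i ∈ Finset.Icc 1 (n-2), (c i : ℝ) * (Hso n i j)
      = ∑ i ∈ Finset.Icc ((j:ℕ)+1) (n-2), (c i : ℝ) := by
    rw [Finset.sum_congr rfl (fun i hi => by
      rw [Hso_low n i hn hi j, mul_ite, mul_one, mul_zero])]
    rw [Finset.sum_ite, Finset.sum_const_zero, add_zero]
    congr 1
    ext i
    simp only [Finset.mem_filter, Finset.mem_Icc]
    omega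
  rw [hHn1, hHn, hlow]
  by_cases h : (j:ℕ) + 2 ≤ n <;> simp [h] <;> ring

lemma mem_two_smul (n : ℕ) (w : Fin n → ℝ) :
    w ∈ (fun v => (2 : ℝ) • v) '' IntLat n ↔ ∀ j, ∃ m : ℤ, w j = 2*m := by
  constructor
  · rintro ⟨v, hv, rfl⟩ j
    obtain ⟨m, hm⟩ := hv j
    exact ⟨m, by simp [hm]⟩
  · intro h
    refine ⟨fun j => w j / 2, fun j => ?_, ?_⟩
    · obtain ⟨m, hm⟩ := h j
      exact ⟨m, by show w j / 2 = (m:ℝ); rw [hm]; ring⟩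
    · funext j; simp; ring

lemma last_coe (n : ℕ) (hn : 4 ≤ n) : ((⟨n-1, by omega⟩ : Fin n) : ℕ) = n - 1 := rfl

lemma Sv_mem_IntLat (n : ℕ) (hn : 4 ≤ n) (c : ℕ → ℕ) :
    Sv n c ∈ IntLat n ↔ (c (n-1) + c n) % 2 = 0 := by
  constructor
  · intro h
    obtain ⟨m, hm⟩ := h ⟨n-1, by omega⟩
    rw [Sv_apply n hn c ⟨n-1, by omega⟩] at hm
    rw [last_coe n hn, if_neg (by omega)] at hm
    have he : Finset.Icc (n-1+1) (n-2) = ∅ := by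
      apply Finset.Icc_eq_empty; omega
    rw [he, Finset.sum_empty, zero_add] at hm
    have : (c n : ℝ) - c (n-1) = 2 * m := by linarith
    have : (c n : ℤ) - c (n-1) = 2 * m := by exact_mod_cast this
    omega
  · intro h j
    rw [Sv_apply n hn c j]
    by_cases hj : (j:ℕ) + 2 ≤ n
    · obtain ⟨k, hk⟩ : ∃ k : ℕ, c (n-1) + c n = 2 * k := ⟨_, (Nat.div_mul_cancel
        (by omega : 2 ∣ c (n-1) + c n)).symm.trans (mul_comm _ 2)⟩
      refine ⟨(∑ i ∈ Finset.Icc ((j:ℕ)+1) (n-2), (c i : ℤ)) + k, ?_⟩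
      rw [if_pos hj]
      push_cast
      rw [show ((c (n-1):ℝ) + c n) = 2 * k by exact_mod_cast hk]
      ring
    · obtain ⟨k, hk⟩ : ∃ k : ℤ, (c n : ℤ) - c (n-1) = 2 * k := ⟨((c n:ℤ) - c (n-1))/2, by omega⟩
      refine ⟨(∑ i ∈ Finset.Icc ((j:ℕ)+1) (n-2), (c i : ℤ)) + k, ?_⟩
      rw [if_neg hj]
      push_cast
      rw [show ((c n:ℝ) - c (n-1)) = 2 * k by exact_mod_cast hk]
      ring

def Cond2 (n : ℕ) (d : ℕ → ℕ) : Prop :=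
  (∀ i ∈ Finset.Icc 1 (n-2), d i % 2 = 0) ∧ d (n-1) % 4 = d n % 4 ∧ d n % 2 = 0

lemma Icc_insert_bot (a b : ℕ) (h : a ≤ b) :
    Finset.Icc a b = insert a (Finset.Icc (a+1) b) := by
  ext i; simp only [Finset.mem_insert, Finset.mem_Icc]; omega

lemma Sv_mem_two (n : ℕ) (hn : 4 ≤ n) (d : ℕ → ℕ) :
    Sv n d ∈ (fun v => (2 : ℝ) • v) '' IntLat n ↔ Cond2 n d := by
  rw [mem_two_smul]
  constructor
  · intro h
    -- last coordinate
    obtain ⟨m, hm⟩ := h ⟨n-1, by omega⟩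
    rw [Sv_apply n hn d ⟨n-1, by omega⟩, last_coe n hn, if_neg (by omega),
      Finset.Icc_eq_empty (by omega), Finset.sum_empty, zero_add] at hm
    have hm' : (d n : ℤ) - d (n-1) = 4 * m := by
      have : (d n : ℝ) - d (n-1) = 4 * m := by linarith
      exact_mod_cast this
    -- coordinate n-2
    obtain ⟨m2, hm2⟩ := h ⟨n-2, by omega⟩
    rw [Sv_apply n hn d ⟨n-2, by omega⟩, show ((⟨n-2, by omega⟩ : Fin n):ℕ) = n-2 from rfl,
      if_pos (by omega), Finset.Icc_eq_empty (by omega), Finset.sum_empty, zero_add] at hm2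
    have hm2' : (d (n-1) : ℤ) + d n = 4 * m2 := by
      have : (d (n-1) : ℝ) + d n = 4 * m2 := by linarith
      exact_mod_cast this
    refine ⟨?_, by omega, by omega⟩
    intro i hi
    simp only [Finset.mem_Icc] at hi
    obtain ⟨ma, hma⟩ := h ⟨i-1, by omega⟩
    obtain ⟨mb, hmb⟩ := h ⟨i, by omega⟩
    rw [Sv_apply n hn d ⟨i-1, by omega⟩, show ((⟨i-1, by omega⟩ : Fin n):ℕ) = i-1 from rfl,
      if_pos (by omega), show i-1+1 = i by omega] at hma
    rw [Sv_apply n hn d ⟨i, by omega⟩, show ((⟨i, by omega⟩ : Fin n):ℕ) = i from rfl,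
      if_pos (by omega)] at hmb
    rw [Icc_insert_bot i (n-2) (by omega), Finset.sum_insert
      (by simp only [Finset.mem_Icc]; omega)] at hma
    have : (d i : ℝ) = 2 * ma - 2 * mb := by linarith
    have : (d i : ℤ) = 2 * ma - 2 * mb := by exact_mod_cast this
    omega
  · rintro ⟨h1, h2, h3⟩ j
    rw [Sv_apply n hn d j]
    have hsum : ∑ i ∈ Finset.Icc ((j:ℕ)+1) (n-2), (d i : ℝ)
        = 2 * ∑ i ∈ Finset.Icc ((j:ℕ)+1) (n-2), ((d i / 2 : ℕ) : ℝ) := by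
      rw [Finset.mul_sum]
      refine Finset.sum_congr rfl (fun i hi => ?_)
      simp only [Finset.mem_Icc] at hi
      have := h1 i (by simp only [Finset.mem_Icc]; omega)
      have : d i = 2 * (d i / 2) := by omega
      exact_mod_cast congrArg (Nat.cast : ℕ → ℝ) this
    by_cases hj : (j:ℕ) + 2 ≤ n
    · rw [if_pos hj, hsum]
      obtain ⟨k, hk⟩ : ∃ k : ℕ, d (n-1) + d n = 4 * k := ⟨(d (n-1) + d n)/4, by omega⟩
      refine ⟨((∑ i ∈ Finset.Icc ((j:ℕ)+1) (n-2), d i / 2 : ℕ) : ℤ) + k, ?_⟩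
      rw [show ((d (n-1):ℝ) + d n) = 4 * k by exact_mod_cast hk]
      rw [Int.cast_add, Int.cast_natCast]
      push_cast
      ring
    · rw [if_neg hj, hsum]
      obtain ⟨k, hk⟩ : ∃ k : ℤ, (d n : ℤ) - d (n-1) = 4 * k := ⟨((d n:ℤ) - d (n-1))/4, by omega⟩
      refine ⟨((∑ i ∈ Finset.Icc ((j:ℕ)+1) (n-2), d i / 2 : ℕ) : ℤ) + k, ?_⟩
      rw [show ((d n:ℝ) - d (n-1)) = 4 * k by exact_mod_cast hk]
      rw [Int.cast_add, Int.cast_natCast]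
      push_cast
      ring

lemma Sv_congr (n : ℕ) (c c' : ℕ → ℕ) (h : ∀ k ∈ Finset.Icc 1 n, c k = c' k) :
    Sv n c = Sv n c' :=
  Finset.sum_congr rfl (fun k hk => by rw [h k hk])

lemma Sv_split (n : ℕ) (c c' : ℕ → ℕ) (h : ∀ k ∈ Finset.Icc 1 n, c' k ≤ c k) :
    Sv n c = Sv n c' + Sv n (fun k => c k - c' k) := by
  unfold Sv
  rw [← Finset.sum_add_distrib]
  refine Finset.sum_congr rfl (fun k hk => ?_)
  rw [← add_smul]
  congr 1
  show c k = c' k + (c k - c' k)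
  have := h k hk
  omega

def Good (n : ℕ) (c : ℕ → ℕ) : Prop :=
  (∀ i ∈ Finset.Icc 1 (n-2), c i ≤ 1) ∧ (c (n-1) + c n) % 2 = 0 ∧
    (c (n-1) ≤ 1 ∨ c n ≤ 1) ∧ c (n-1) ≤ 3 ∧ c n ≤ 3

lemma step_lemma (n : ℕ) (hn : 4 ≤ n) (c : ℕ → ℕ)
    (hmem : Sv n c ∈ IntLat n)
    (hmin : ∀ c' : ℕ → ℕ, (∀ i ∈ Finset.Icc 1 n, c' i ≤ c i) →
      Sv n c' ∈ IntLat n →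
      (Sv n c - Sv n c') ∈ (fun v => (2 : ℝ) • v) '' IntLat n →
      Sv n c' = Sv n c)
    (d : ℕ → ℕ) (hd : ∀ k ∈ Finset.Icc 1 n, d k ≤ c k) (hC : Cond2 n d)
    (hnz : Sv n d ⟨0, by omega⟩ ≠ 0) : False := by
  set c' : ℕ → ℕ := fun k => c k - d k with hc'
  have hle : ∀ i ∈ Finset.Icc 1 n, c' i ≤ c i := fun i _ => Nat.sub_le _ _
  have hsplit : Sv n c = Sv n c' + Sv n (fun k => c k - c' k) := Sv_split n c c' hle
  have hdeq : Sv n (fun k => c k - c' k) = Sv n d := by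
    refine Sv_congr n _ _ (fun k hk => ?_)
    have := hd k hk
    simp only [hc']
    omega
  rw [hdeq] at hsplit
  have hdn1 : d (n-1) % 2 = 0 := by obtain ⟨_, h2, h3⟩ := hC; omega
  have hc'mem : Sv n c' ∈ IntLat n := by
    rw [Sv_mem_IntLat n hn] at hmem ⊢
    have h1 := hd (n-1) (by simp only [Finset.mem_Icc]; omega)
    have h2 := hd n (by simp only [Finset.mem_Icc]; omega)
    have hdn : d n % 2 = 0 := hC.2.2
    simp only [hc']
    omega
  have h2l : (Sv n c - Sv n c') ∈ (fun v => (2 : ℝ) • v) '' IntLat n := by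
    rw [show Sv n c - Sv n c' = Sv n d by rw [hsplit]; abel]
    exact (Sv_mem_two n hn d).2 hC
  have heq := hmin c' hle hc'mem h2l
  rw [← heq, left_eq_add] at hsplit
  exact hnz (by rw [hsplit]; rfl)

lemma Sv_zero_coord (n : ℕ) (hn : 4 ≤ n) (d : ℕ → ℕ) :
    Sv n d ⟨0, by omega⟩ = (∑ i ∈ Finset.Icc 1 (n-2), (d i : ℝ)) +
      ((d (n-1) : ℝ) + d n)/2 := by
  rw [Sv_apply n hn d ⟨0, by omega⟩]
  rw [show ((⟨0, by omega⟩ : Fin n) : ℕ) = 0 from rfl, if_pos (by omega : 0+2 ≤ n)]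

lemma symCanon_eq_good (n : ℕ) (hn : 4 ≤ n) :
    SymCanonSet n (IntLat n) (Hso n) = {ξ | ∃ c, Good n c ∧ ξ = Sv n c} := by
  have hSv : ∀ c : ℕ → ℕ, (∑ i ∈ Finset.Icc 1 n, c i • Hso n i) = Sv n c := fun _ => rfl
  ext ξ
  constructor
  · rintro ⟨c, hξ, hmem, hmin⟩
    rw [hSv] at hξ
    refine ⟨c, ?_, hξ⟩
    have hmem' : Sv n c ∈ IntLat n := hξ ▸ hmem
    have hmin' : ∀ c' : ℕ → ℕ, (∀ i ∈ Finset.Icc 1 n, c' i ≤ c i) →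
        Sv n c' ∈ IntLat n →
        (Sv n c - Sv n c') ∈ (fun v => (2 : ℝ) • v) '' IntLat n →
        Sv n c' = Sv n c := by
      intro c' h1 h2 h3
      rw [← hξ] at h3
      have := hmin c' h1 (by rw [hSv]; exact h2) h3
      rw [hSv, hξ] at this
      exact this
    refine ⟨?_, (Sv_mem_IntLat n hn c).1 hmem', ?_, ?_, ?_⟩
    · intro i hi
      simp only [Finset.mem_Icc] at hi
      by_contra hc
      refine step_lemma n hn c hmem' hmin' (fun k => if k = i then 2 else 0) ?_ ?_ ?_
      · intro k _
        show (if k = i then 2 else 0) ≤ c k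
        by_cases hk : k = i
        · subst hk; rw [if_pos rfl]; omega
        · rw [if_neg hk]; omega
      · refine ⟨fun k _ => ?_, ?_, ?_⟩
        · show (if k = i then 2 else 0) % 2 = 0
          by_cases hk : k = i <;> simp [hk]
        · show (if n - 1 = i then 2 else 0) % 4 = (if n = i then 2 else 0) % 4
          rw [if_neg (by omega), if_neg (by omega)]
        · show (if n = i then 2 else 0) % 2 = 0
          rw [if_neg (by omega)]
      · rw [Sv_zero_coord n hn]
        show (∑ k ∈ Finset.Icc 1 (n-2), ((if k = i then 2 else 0 : ℕ) : ℝ)) +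
          (((if n - 1 = i then 2 else 0 : ℕ) : ℝ) + ((if n = i then 2 else 0 : ℕ) : ℝ))/2 ≠ 0
        rw [if_neg (by omega : ¬ n - 1 = i), if_neg (by omega : ¬ n = i)]
        have : ∑ k ∈ Finset.Icc 1 (n-2), ((if k = i then 2 else 0 : ℕ) : ℝ) = 2 := by
          rw [Finset.sum_congr rfl (fun k _ =>
            show ((if k = i then 2 else 0 : ℕ) : ℝ) = if k = i then (2:ℝ) else 0 by
              by_cases hk : k = i <;> simp [hk]),
            Finset.sum_ite_eq' (Finset.Icc 1 (n-2)) i (fun _ => (2:ℝ)),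
            if_pos (by simp only [Finset.mem_Icc]; omega)]
        rw [this]
        norm_num
    · by_contra hc
      push_neg at hc
      refine step_lemma n hn c hmem' hmin'
        (fun k => if k = n-1 then 2 else if k = n then 2 else 0) ?_ ?_ ?_
      · intro k _
        show (if k = n-1 then 2 else if k = n then 2 else 0) ≤ c k
        by_cases hk : k = n-1
        · subst hk; rw [if_pos rfl]; omega
        · by_cases hk2 : k = n
          · subst hk2; rw [if_neg hk, if_pos rfl]; omega
          · rw [if_neg hk, if_neg hk2]; omega
      · refine ⟨fun k hk => ?_, ?_, ?_⟩
        · simp only [Finset.mem_Icc] at hk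
          show (if k = n-1 then 2 else if k = n then 2 else 0) % 2 = 0
          rw [if_neg (by omega), if_neg (by omega)]
        · show (if n-1 = n-1 then 2 else if n-1 = n then 2 else 0) % 4 =
            (if n = n-1 then 2 else if n = n then 2 else 0) % 4
          rw [if_pos rfl, if_neg (by omega), if_pos rfl]
        · show (if n = n-1 then 2 else if n = n then 2 else 0) % 2 = 0
          rw [if_neg (by omega), if_pos rfl]
      · rw [Sv_zero_coord n hn]
        show (∑ k ∈ Finset.Icc 1 (n-2),
            ((if k = n-1 then 2 else if k = n then 2 else 0 : ℕ) : ℝ)) +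
          (((if n-1 = n-1 then 2 else if n-1 = n then 2 else 0 : ℕ) : ℝ) +
           ((if n = n-1 then 2 else if n = n then 2 else 0 : ℕ) : ℝ))/2 ≠ 0
        rw [if_pos rfl, if_neg (by omega : ¬ n = n - 1), if_pos rfl]
        rw [Finset.sum_eq_zero (fun k hk => by
          simp only [Finset.mem_Icc] at hk
          rw [if_neg (by omega), if_neg (by omega)]; norm_num)]
        norm_num
    · by_contra hc
      push_neg at hc
      refine step_lemma n hn c hmem' hmin' (fun k => if k = n-1 then 4 else 0) ?_ ?_ ?_
      · intro k _
        show (if k = n-1 then 4 else 0) ≤ c k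
        by_cases hk : k = n-1
        · subst hk; rw [if_pos rfl]; omega
        · rw [if_neg hk]; omega
      · refine ⟨fun k hk => ?_, ?_, ?_⟩
        · simp only [Finset.mem_Icc] at hk
          show (if k = n-1 then 4 else 0) % 2 = 0
          rw [if_neg (by omega)]
        · show (if n-1 = n-1 then 4 else 0) % 4 = (if n = n-1 then 4 else 0) % 4
          rw [if_pos rfl, if_neg (by omega)]
        · show (if n = n-1 then 4 else 0) % 2 = 0
          rw [if_neg (by omega)]
      · rw [Sv_zero_coord n hn]
        show (∑ k ∈ Finset.Icc 1 (n-2), ((if k = n-1 then 4 else 0 : ℕ) : ℝ)) +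
          (((if n-1 = n-1 then 4 else 0 : ℕ) : ℝ) + ((if n = n-1 then 4 else 0 : ℕ) : ℝ))/2 ≠ 0
        rw [if_pos rfl, if_neg (by omega : ¬ n = n - 1)]
        rw [Finset.sum_eq_zero (fun k hk => by
          simp only [Finset.mem_Icc] at hk
          rw [if_neg (by omega)]; norm_num)]
        norm_num
    · by_contra hc
      push_neg at hc
      refine step_lemma n hn c hmem' hmin' (fun k => if k = n then 4 else 0) ?_ ?_ ?_
      · intro k _
        show (if k = n then 4 else 0) ≤ c k
        by_cases hk : k = n
        · subst hk; rw [if_pos rfl]; omega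
        · rw [if_neg hk]; omega
      · refine ⟨fun k hk => ?_, ?_, ?_⟩
        · simp only [Finset.mem_Icc] at hk
          show (if k = n then 4 else 0) % 2 = 0
          rw [if_neg (by omega)]
        · show (if n-1 = n then 4 else 0) % 4 = (if n = n then 4 else 0) % 4
          rw [if_pos rfl, if_neg (by omega)]
        · show (if n = n then 4 else 0) % 2 = 0
          rw [if_pos rfl]
      · rw [Sv_zero_coord n hn]
        show (∑ k ∈ Finset.Icc 1 (n-2), ((if k = n then 4 else 0 : ℕ) : ℝ)) +
          (((if n-1 = n then 4 else 0 : ℕ) : ℝ) + ((if n = n then 4 else 0 : ℕ) : ℝ))/2 ≠ 0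
        rw [if_neg (by omega : ¬ n - 1 = n), if_pos rfl]
        rw [Finset.sum_eq_zero (fun k hk => by
          simp only [Finset.mem_Icc] at hk
          rw [if_neg (by omega)]; norm_num)]
        norm_num
  · rintro ⟨c, hGood, rfl⟩
    obtain ⟨hg1, hg2, hg3, hg4, hg5⟩ := hGood
    refine ⟨c, rfl, (Sv_mem_IntLat n hn c).2 hg2, ?_⟩
    intro c' hle hmem' h2l
    have hsplit : Sv n c = Sv n c' + Sv n (fun k => c k - c' k) := Sv_split n c c' hle
    have h2l' : Sv n (fun k => c k - c' k) ∈ (fun v => (2 : ℝ) • v) '' IntLat n := by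
      have heq2 : Sv n c - Sv n c' = Sv n (fun k => c k - c' k) := by rw [hsplit]; abel
      rw [← heq2]
      rw [hSv] at h2l
      exact h2l
    obtain ⟨hC1, hC2, hC3⟩ := (Sv_mem_two n hn _).1 h2l'
    have hC2' : (c (n-1) - c' (n-1)) % 4 = (c n - c' n) % 4 := hC2
    have hC3' : (c n - c' n) % 2 = 0 := hC3
    have heq : ∀ k ∈ Finset.Icc 1 n, c' k = c k := by
      intro k hk
      simp only [Finset.mem_Icc] at hk
      by_cases hk2 : k ≤ n - 2
      · have h1 : (c k - c' k) % 2 = 0 := hC1 k (by simp only [Finset.mem_Icc]; omega)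
        have h2 := hg1 k (by simp only [Finset.mem_Icc]; omega)
        have h3 := hle k (by simp only [Finset.mem_Icc]; omega)
        omega
      · have h1 := hle (n-1) (by simp only [Finset.mem_Icc]; omega)
        have h2 := hle n (by simp only [Finset.mem_Icc]; omega)
        have : k = n-1 ∨ k = n := by omega
        rcases this with rfl | rfl <;> omega
    exact Sv_congr n c' c heq

lemma Sv_add (n : ℕ) (a b : ℕ → ℕ) :
    Sv n (fun k => a k + b k) = Sv n a + Sv n b := by
  unfold Sv
  rw [← Finset.sum_add_distrib]
  exact Finset.sum_congr rfl (fun k _ => by rw [← add_smul])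

lemma Sv_chi (n : ℕ) (I : Finset ℕ) (hI : I ⊆ Finset.Icc 1 n) :
    (∑ i ∈ I, Hso n i) = Sv n (fun k => if k ∈ I then 1 else 0) := by
  unfold Sv
  rw [Finset.sum_congr rfl (fun k hk =>
    show ((if k ∈ I then 1 else 0 : ℕ) • Hso n k) = if k ∈ I then Hso n k else 0 by
      by_cases h : k ∈ I <;> simp [h])]
  rw [Finset.sum_ite_mem, Finset.inter_eq_right.2 hI]

lemma Sv_single (n : ℕ) (s m : ℕ) (hs : m ≠ 0 → s ∈ Finset.Icc 1 n) :
    (m • Hso n s : Fin n → ℝ) = Sv n (fun k => if k = s then m else 0) := by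
  rcases Nat.eq_zero_or_pos m with rfl | hm
  · simp only [zero_smul]
    rw [show (fun k => if k = s then 0 else 0 : ℕ → ℕ) = fun _ => 0 by
      funext k; exact ite_self 0]
    exact (Finset.sum_eq_zero (fun k _ => by simp)).symm
  · unfold Sv
    rw [Finset.sum_congr rfl (fun k hk =>
      show ((if k = s then m else 0 : ℕ) • Hso n k) = if k = s then m • Hso n k else 0 by
        by_cases h : k = s <;> simp [h])]
    rw [Finset.sum_ite_eq' (Finset.Icc 1 n) s (fun k => m • Hso n k),
      if_pos (hs (by omega))]

lemma card_inter_pair (n : ℕ) (hn : 4 ≤ n) (I : Finset ℕ) :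
    (I ∩ {n-1, n}).card = (if n-1 ∈ I then 1 else 0) + (if n ∈ I then 1 else 0) := by
  have hne : (n:ℕ)-1 ≠ n := by omega
  by_cases h1 : n-1 ∈ I <;> by_cases h2 : n ∈ I
  · rw [if_pos h1, if_pos h2,
      show I ∩ {n-1, n} = ({n-1, n} : Finset ℕ) from by
        ext x
        simp only [Finset.mem_inter, Finset.mem_insert, Finset.mem_singleton]
        constructor
        · exact fun h => h.2
        · rintro (rfl | rfl) <;> simp [h1, h2]]
    rw [Finset.card_insert_of_notMem (by simp [hne]), Finset.card_singleton]
  · rw [if_pos h1, if_neg h2,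
      show I ∩ {n-1, n} = ({n-1} : Finset ℕ) from by
        ext x
        simp only [Finset.mem_inter, Finset.mem_insert, Finset.mem_singleton]
        constructor
        · rintro ⟨hx, rfl | rfl⟩
          · rfl
          · exact absurd hx h2
        · rintro rfl; simp [h1]]
    simp
  · rw [if_neg h1, if_pos h2,
      show I ∩ {n-1, n} = ({n} : Finset ℕ) from by
        ext x
        simp only [Finset.mem_inter, Finset.mem_insert, Finset.mem_singleton]
        constructor
        · rintro ⟨hx, rfl | rfl⟩
          · exact absurd hx h1
          · rfl
        · rintro rfl; simp [h2]]
    simp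
  · rw [if_neg h1, if_neg h2,
      show I ∩ {n-1, n} = (∅ : Finset ℕ) from by
        ext x
        simp only [Finset.mem_inter, Finset.mem_insert, Finset.mem_singleton,
          Finset.notMem_empty, iff_false, not_and]
        rintro hx (rfl | rfl)
        · exact h1 hx
        · exact h2 hx]
    simp

lemma Sv_eq_expr (n : ℕ) (I : Finset ℕ) (hI : I ⊆ Finset.Icc 1 n) (s m : ℕ)
    (hs : m ≠ 0 → s ∈ Finset.Icc 1 n) (c : ℕ → ℕ)
    (hc : ∀ k ∈ Finset.Icc 1 n, c k = (if k ∈ I then 1 else 0) + (if k = s then m else 0)) :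
    Sv n c = (∑ i ∈ I, Hso n i) + m • Hso n s := by
  rw [Sv_chi n I hI, Sv_single n s m hs, ← Sv_add]
  exact Sv_congr n c _ hc

lemma Good_aux (n : ℕ) (hn : 4 ≤ n) (I : Finset ℕ) (t m : ℕ)
    (ht : m ≠ 0 → t = n-1 ∨ t = n)
    (h : ((if n-1 ∈ I then 1 else 0) + (if n-1 = t then m else 0) +
          ((if n ∈ I then 1 else 0) + (if n = t then m else 0))) % 2 = 0 ∧
         ((if n-1 ∈ I then 1 else 0) + (if n-1 = t then m else 0) ≤ 1 ∨
          (if n ∈ I then 1 else 0) + (if n = t then m else 0) ≤ 1) ∧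
         (if n-1 ∈ I then 1 else 0) + (if n-1 = t then m else 0) ≤ 3 ∧
         (if n ∈ I then 1 else 0) + (if n = t then m else 0) ≤ 3) :
    Good n (fun k => (if k ∈ I then 1 else 0) + (if k = t then m else 0)) := by
  refine ⟨?_, h.1, h.2.1, h.2.2.1, h.2.2.2⟩
  intro i hi
  simp only [Finset.mem_Icc] at hi
  show (if i ∈ I then 1 else 0) + (if i = t then m else 0) ≤ 1
  rcases Nat.eq_zero_or_pos m with rfl | hm
  · rw [ite_self]
    by_cases h' : i ∈ I <;> simp [h']
  · have ht' := ht (by omega)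
    rw [if_neg (show ¬ i = t by omega)]
    by_cases h' : i ∈ I <;> simp [h']

/-- The symmetric canonical elements of `SO(2n)` are precisely the
elements `ξ_I + ε^1_I H_s` and `ξ_I + ε^1_I H_s + 2ε^2_I H_s`, over `I ⊆ {1,…,n}` and
`s ∈ {n-1,n} ∩ I`; the parameter `s` is constrained to its range exactly when the
`ε`-coefficient of an `H_s`-term is nonzero. -/
theorem so_even_symmetric_canonical (n : ℕ) (hn : 4 ≤ n) :
    SymCanonSet n (IntLat n) (Hso n) =
      {ξ | ∃ I : Finset ℕ, I ⊆ Finset.Icc 1 n ∧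
        ∃ s : ℕ,
          ((epsI n I 1 ≠ 0 → s ∈ ({n - 1, n} : Finset ℕ) ∩ I) ∧
             ξ = (∑ i ∈ I, Hso n i) + epsI n I 1 • Hso n s) ∨
          ((epsI n I 1 ≠ 0 ∨ epsI n I 2 ≠ 0 → s ∈ ({n - 1, n} : Finset ℕ) ∩ I) ∧
             ξ = (∑ i ∈ I, Hso n i) + epsI n I 1 • Hso n s +
                   (2 * epsI n I 2) • Hso n s)} := by
  rw [symCanon_eq_good n hn]
  ext ξ
  simp only [Set.mem_setOf_eq]
  have hne : (n:ℕ) - 1 ≠ n := by omega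
  have hmp1 : (n-1 : ℕ) ∈ ({n-1, n} : Finset ℕ) := Finset.mem_insert_self _ _
  have hmp2 : (n : ℕ) ∈ ({n-1, n} : Finset ℕ) := by
    simp [Finset.mem_insert]
  constructor
  · rintro ⟨c, ⟨hg1, hg2, hg3, hg4, hg5⟩, rfl⟩
    set I : Finset ℕ := Finset.filter (fun i => 1 ≤ c i) (Finset.Icc 1 n) with hIdef
    have hIsub : I ⊆ Finset.Icc 1 n := Finset.filter_subset _ _
    have hmemI : ∀ k, k ∈ I ↔ (k ∈ Finset.Icc 1 n ∧ 1 ≤ c k) := fun k => Finset.mem_filter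
    have hP : (n-1 ∈ I) ↔ 1 ≤ c (n-1) := by
      rw [hmemI]
      simp only [Finset.mem_Icc]
      exact ⟨fun h => h.2, fun h => ⟨⟨by omega, by omega⟩, h⟩⟩
    have hQ : (n ∈ I) ↔ 1 ≤ c n := by
      rw [hmemI]
      simp only [Finset.mem_Icc]
      exact ⟨fun h => h.2, fun h => ⟨⟨by omega, le_refl n⟩, h⟩⟩
    have hcard := card_inter_pair n hn I
    have hchi : ∀ k ∈ Finset.Icc 1 n, c k ≤ 1 → c k = (if k ∈ I then 1 else 0) := by
      intro k hk hck
      by_cases h : k ∈ I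
      · rw [if_pos h]
        have := ((hmemI k).1 h).2
        omega
      · rw [if_neg h]
        have : ¬ (1 ≤ c k) := fun hc1 => h ((hmemI k).2 ⟨hk, hc1⟩)
        omega
    have hlow : ∀ k, 1 ≤ k → k ≤ n-2 → c k ≤ 1 := fun k ha hb =>
      hg1 k (by simp only [Finset.mem_Icc]; exact ⟨ha, hb⟩)
    have hsplitc : (c (n-1) ≤ 1 ∧ c n ≤ 1) ∨ (c (n-1) = 2 ∧ c n = 0) ∨
        (c n = 2 ∧ c (n-1) = 0) ∨ (c (n-1) = 3 ∧ c n = 1) ∨ (c n = 3 ∧ c (n-1) = 1) := by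
      omega
    rcases hsplitc with ⟨h1, h2⟩ | ⟨h1, h2⟩ | ⟨h1, h2⟩ | ⟨h1, h2⟩ | ⟨h1, h2⟩
    · -- both ≤ 1
      have hcv : (I ∩ {n-1, n}).card ≠ 1 := by
        rw [hcard]
        by_cases hcn : 1 ≤ c (n-1)
        · rw [if_pos (hP.2 hcn), if_pos (hQ.2 (by omega))]
          omega
        · rw [if_neg (fun hin => hcn (hP.1 hin)),
            if_neg (fun hin => (show ¬ (1 ≤ c n) by omega) (hQ.1 hin))]
          omega
      have he1 : epsI n I 1 = 0 := by simp [epsI, hcv]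
      refine ⟨I, hIsub, n, Or.inl ⟨fun h => absurd he1 h, ?_⟩⟩
      rw [he1]
      refine Sv_eq_expr n I hIsub n 0 (fun h => absurd rfl h) c ?_
      intro k hk
      rw [ite_self, Nat.add_zero]
      have hk' := hk
      simp only [Finset.mem_Icc] at hk'
      refine hchi k hk ?_
      by_cases h : k ≤ n-2
      · exact hlow k hk'.1 h
      · have : k = n-1 ∨ k = n := by omega
        rcases this with rfl | rfl <;> omega
    · -- (2,0)
      have hp : n-1 ∈ I := hP.2 (by omega)
      have hq : n ∉ I := fun h => by have := hQ.1 h; omega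
      have hcv : (I ∩ {n-1, n}).card = 1 := by rw [hcard, if_pos hp, if_neg hq]
      have he1 : epsI n I 1 = 1 := by simp [epsI, hcv]
      refine ⟨I, hIsub, n-1, Or.inl ⟨fun _ => Finset.mem_inter.2 ⟨hmp1, hp⟩, ?_⟩⟩
      rw [he1]
      refine Sv_eq_expr n I hIsub (n-1) 1
        (fun _ => by simp only [Finset.mem_Icc]; omega) c ?_
      intro k hk
      have hk' := hk
      simp only [Finset.mem_Icc] at hk'
      by_cases hks : k = n-1
      · subst hks
        rw [if_pos rfl, if_pos hp]
        omega
      · rw [if_neg hks, Nat.add_zero]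
        by_cases hkn : k = n
        · subst hkn
          rw [if_neg hq]
          omega
        · exact hchi k hk (hlow k hk'.1 (by omega))
    · -- (0,2)
      have hq : n ∈ I := hQ.2 (by omega)
      have hp : n-1 ∉ I := fun h => by have := hP.1 h; omega
      have hcv : (I ∩ {n-1, n}).card = 1 := by rw [hcard, if_neg hp, if_pos hq]
      have he1 : epsI n I 1 = 1 := by simp [epsI, hcv]
      refine ⟨I, hIsub, n, Or.inl ⟨fun _ => Finset.mem_inter.2 ⟨hmp2, hq⟩, ?_⟩⟩
      rw [he1]
      refine Sv_eq_expr n I hIsub n 1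
        (fun _ => by simp only [Finset.mem_Icc]; omega) c ?_
      intro k hk
      have hk' := hk
      simp only [Finset.mem_Icc] at hk'
      by_cases hks : k = n
      · subst hks
        rw [if_pos rfl, if_pos hq]
        omega
      · rw [if_neg hks, Nat.add_zero]
        by_cases hkn : k = n-1
        · subst hkn
          rw [if_neg hp]
          omega
        · exact hchi k hk (hlow k hk'.1 (by omega))
    · -- (3,1)
      have hp : n-1 ∈ I := hP.2 (by omega)
      have hq : n ∈ I := hQ.2 (by omega)
      have hcv : (I ∩ {n-1, n}).card = 2 := by rw [hcard, if_pos hp, if_pos hq]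
      have he1 : epsI n I 1 = 0 := by simp [epsI, hcv]
      have he2 : epsI n I 2 = 1 := by simp [epsI, hcv]
      refine ⟨I, hIsub, n-1, Or.inr ⟨fun _ => Finset.mem_inter.2 ⟨hmp1, hp⟩, ?_⟩⟩
      rw [he1, he2, zero_smul, add_zero, mul_one]
      refine Sv_eq_expr n I hIsub (n-1) 2
        (fun _ => by simp only [Finset.mem_Icc]; omega) c ?_
      intro k hk
      have hk' := hk
      simp only [Finset.mem_Icc] at hk'
      by_cases hks : k = n-1
      · subst hks
        rw [if_pos rfl, if_pos hp]
        omega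
      · rw [if_neg hks, Nat.add_zero]
        by_cases hkn : k = n
        · subst hkn
          rw [if_pos hq]
          omega
        · exact hchi k hk (hlow k hk'.1 (by omega))
    · -- (1,3)
      have hp : n-1 ∈ I := hP.2 (by omega)
      have hq : n ∈ I := hQ.2 (by omega)
      have hcv : (I ∩ {n-1, n}).card = 2 := by rw [hcard, if_pos hp, if_pos hq]
      have he1 : epsI n I 1 = 0 := by simp [epsI, hcv]
      have he2 : epsI n I 2 = 1 := by simp [epsI, hcv]
      refine ⟨I, hIsub, n, Or.inr ⟨fun _ => Finset.mem_inter.2 ⟨hmp2, hq⟩, ?_⟩⟩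
      rw [he1, he2, zero_smul, add_zero, mul_one]
      refine Sv_eq_expr n I hIsub n 2
        (fun _ => by simp only [Finset.mem_Icc]; omega) c ?_
      intro k hk
      have hk' := hk
      simp only [Finset.mem_Icc] at hk'
      by_cases hks : k = n
      · subst hks
        rw [if_pos rfl, if_pos hq]
        omega
      · rw [if_neg hks, Nat.add_zero]
        by_cases hkn : k = n-1
        · subst hkn
          rw [if_pos hp]
          omega
        · exact hchi k hk (hlow k hk'.1 (by omega))
  · rintro ⟨I, hIsub, s, hOr⟩
    have hcard := card_inter_pair n hn I
    rcases hOr with ⟨hs1, hξ⟩ | ⟨hs2, hξ⟩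
    · -- form 1
      by_cases hp : n-1 ∈ I <;> by_cases hq : n ∈ I
      · have hcv : (I ∩ {n-1, n}).card = 2 := by rw [hcard, if_pos hp, if_pos hq]
        have he1 : epsI n I 1 = 0 := by simp [epsI, hcv]
        refine ⟨fun k => (if k ∈ I then 1 else 0) + (if k = s then 0 else 0), ?_, ?_⟩
        · refine Good_aux n hn I s 0 (fun h => absurd rfl h) ?_
          rw [ite_self, ite_self, if_pos hp, if_pos hq]
          norm_num
        · rw [hξ, he1]
          exact (Sv_eq_expr n I hIsub s 0 (fun h => absurd rfl h) _ (fun k _ => rfl)).symm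
      · have hcv : (I ∩ {n-1, n}).card = 1 := by rw [hcard, if_pos hp, if_neg hq]
        have he1 : epsI n I 1 = 1 := by simp [epsI, hcv]
        have hsmem := hs1 (by rw [he1]; exact one_ne_zero)
        have hsI := (Finset.mem_inter.1 hsmem).2
        have hs' : s = n-1 ∨ s = n := by
          have := (Finset.mem_inter.1 hsmem).1
          simpa [Finset.mem_insert, Finset.mem_singleton] using this
        have hsn1 : s = n-1 := by
          rcases hs' with rfl | rfl
          · rfl
          · exact absurd hsI hq
        subst hsn1
        refine ⟨fun k => (if k ∈ I then 1 else 0) + (if k = n-1 then 1 else 0), ?_, ?_⟩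
        · refine Good_aux n hn I (n-1) 1 (fun _ => Or.inl rfl) ?_
          rw [if_pos hp, if_neg hq, if_pos rfl, if_neg (Ne.symm hne)]
          norm_num
        · rw [hξ, he1]
          exact (Sv_eq_expr n I hIsub (n-1) 1 (fun _ => hIsub hsI) _ (fun k _ => rfl)).symm
      · have hcv : (I ∩ {n-1, n}).card = 1 := by rw [hcard, if_neg hp, if_pos hq]
        have he1 : epsI n I 1 = 1 := by simp [epsI, hcv]
        have hsmem := hs1 (by rw [he1]; exact one_ne_zero)
        have hsI := (Finset.mem_inter.1 hsmem).2
        have hs' : s = n-1 ∨ s = n := by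
          have := (Finset.mem_inter.1 hsmem).1
          simpa [Finset.mem_insert, Finset.mem_singleton] using this
        have hsn : s = n := by
          rcases hs' with h | h
          · exact absurd (h ▸ hsI) hp
          · exact h
        refine ⟨fun k => (if k ∈ I then 1 else 0) + (if k = s then 1 else 0), ?_, ?_⟩
        · refine Good_aux n hn I s 1 (fun _ => Or.inr hsn) ?_
          rw [if_neg hp, if_pos hq, if_pos hsn.symm, if_neg (show ¬ (n-1 = s) by omega)]
          norm_num
        · rw [hξ, he1]
          exact (Sv_eq_expr n I hIsub s 1 (fun _ => hIsub hsI) _ (fun k _ => rfl)).symm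
      · have hcv : (I ∩ {n-1, n}).card = 0 := by rw [hcard, if_neg hp, if_neg hq]
        have he1 : epsI n I 1 = 0 := by simp [epsI, hcv]
        refine ⟨fun k => (if k ∈ I then 1 else 0) + (if k = s then 0 else 0), ?_, ?_⟩
        · refine Good_aux n hn I s 0 (fun h => absurd rfl h) ?_
          rw [ite_self, ite_self, if_neg hp, if_neg hq]
          norm_num
        · rw [hξ, he1]
          exact (Sv_eq_expr n I hIsub s 0 (fun h => absurd rfl h) _ (fun k _ => rfl)).symm
    · -- form 2
      by_cases hp : n-1 ∈ I <;> by_cases hq : n ∈ I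
      · have hcv : (I ∩ {n-1, n}).card = 2 := by rw [hcard, if_pos hp, if_pos hq]
        have he1 : epsI n I 1 = 0 := by simp [epsI, hcv]
        have he2 : epsI n I 2 = 1 := by simp [epsI, hcv]
        have hsmem := hs2 (Or.inr (by rw [he2]; exact one_ne_zero))
        have hsI := (Finset.mem_inter.1 hsmem).2
        have hs' : s = n-1 ∨ s = n := by
          have := (Finset.mem_inter.1 hsmem).1
          simpa [Finset.mem_insert, Finset.mem_singleton] using this
        rcases hs' with hsn | hsn
        · refine ⟨fun k => (if k ∈ I then 1 else 0) + (if k = s then 2 else 0), ?_, ?_⟩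
          · refine Good_aux n hn I s 2 (fun _ => Or.inl hsn) ?_
            rw [if_pos hp, if_pos hq, if_pos hsn.symm, if_neg (show ¬ (n = s) by omega)]
            norm_num
          · rw [hξ, he1, he2, zero_smul, add_zero, mul_one]
            exact (Sv_eq_expr n I hIsub s 2 (fun _ => hIsub hsI) _ (fun k _ => rfl)).symm
        · refine ⟨fun k => (if k ∈ I then 1 else 0) + (if k = s then 2 else 0), ?_, ?_⟩
          · refine Good_aux n hn I s 2 (fun _ => Or.inr hsn) ?_
            rw [if_pos hp, if_pos hq, if_pos hsn.symm, if_neg (show ¬ (n-1 = s) by omega)]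
            norm_num
          · rw [hξ, he1, he2, zero_smul, add_zero, mul_one]
            exact (Sv_eq_expr n I hIsub s 2 (fun _ => hIsub hsI) _ (fun k _ => rfl)).symm
      · have hcv : (I ∩ {n-1, n}).card = 1 := by rw [hcard, if_pos hp, if_neg hq]
        have he1 : epsI n I 1 = 1 := by simp [epsI, hcv]
        have he2 : epsI n I 2 = 0 := by simp [epsI, hcv]
        have hsmem := hs2 (Or.inl (by rw [he1]; exact one_ne_zero))
        have hsI := (Finset.mem_inter.1 hsmem).2
        have hs' : s = n-1 ∨ s = n := by
          have := (Finset.mem_inter.1 hsmem).1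
          simpa [Finset.mem_insert, Finset.mem_singleton] using this
        have hsn1 : s = n-1 := by
          rcases hs' with rfl | rfl
          · rfl
          · exact absurd hsI hq
        subst hsn1
        refine ⟨fun k => (if k ∈ I then 1 else 0) + (if k = n-1 then 1 else 0), ?_, ?_⟩
        · refine Good_aux n hn I (n-1) 1 (fun _ => Or.inl rfl) ?_
          rw [if_pos hp, if_neg hq, if_pos rfl, if_neg (Ne.symm hne)]
          norm_num
        · rw [hξ, he1, he2, mul_zero, zero_smul, add_zero]
          exact (Sv_eq_expr n I hIsub (n-1) 1 (fun _ => hIsub hsI) _ (fun k _ => rfl)).symm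
      · have hcv : (I ∩ {n-1, n}).card = 1 := by rw [hcard, if_neg hp, if_pos hq]
        have he1 : epsI n I 1 = 1 := by simp [epsI, hcv]
        have he2 : epsI n I 2 = 0 := by simp [epsI, hcv]
        have hsmem := hs2 (Or.inl (by rw [he1]; exact one_ne_zero))
        have hsI := (Finset.mem_inter.1 hsmem).2
        have hs' : s = n-1 ∨ s = n := by
          have := (Finset.mem_inter.1 hsmem).1
          simpa [Finset.mem_insert, Finset.mem_singleton] using this
        have hsn : s = n := by
          rcases hs' with h | h
          · exact absurd (h ▸ hsI) hp
          · exact h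
        refine ⟨fun k => (if k ∈ I then 1 else 0) + (if k = s then 1 else 0), ?_, ?_⟩
        · refine Good_aux n hn I s 1 (fun _ => Or.inr hsn) ?_
          rw [if_neg hp, if_pos hq, if_pos hsn.symm, if_neg (show ¬ (n-1 = s) by omega)]
          norm_num
        · rw [hξ, he1, he2, mul_zero, zero_smul, add_zero]
          exact (Sv_eq_expr n I hIsub s 1 (fun _ => hIsub hsI) _ (fun k _ => rfl)).symm
      · have hcv : (I ∩ {n-1, n}).card = 0 := by rw [hcard, if_neg hp, if_neg hq]
        have he1 : epsI n I 1 = 0 := by simp [epsI, hcv]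
        have he2 : epsI n I 2 = 0 := by simp [epsI, hcv]
        refine ⟨fun k => (if k ∈ I then 1 else 0) + (if k = s then 0 else 0), ?_, ?_⟩
        · refine Good_aux n hn I s 0 (fun h => absurd rfl h) ?_
          rw [ite_self, ite_self, if_neg hp, if_neg hq]
          norm_num
        · have e := Sv_eq_expr n I hIsub s 0 (fun h => absurd rfl h)
            (fun k => (if k ∈ I then 1 else 0) + (if k = s then 0 else 0)) (fun k _ => rfl)
          rw [hξ, he1, he2, mul_zero, e, zero_smul, add_zero, add_zero]
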